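/- Fix integers m ≥ 0, k ≥ 1 and n with n ≥ 2k + m, real constants c₁,…,c_k, real numbers π_{k+1},…,π_n, and E ∈ ℂ. Set ε = E − Σ_{j=k+1}^{⌊(n−m)/2⌋} π_{n−m+1−j} π_j − ((n−m−2⌊(n−m)/2⌋)/2) π²_{n−m−⌊(n−m)/2⌋} − ½ Σ_{j=n−m+1}^{n} π_j π_{2n−m+1−j}. Suppose S₀: ℝ^k → ℂ is a smooth function satisfying the reduced Hamilton–Jacobi equation Σ_{j=1}^{k} π_{n−m+1−j} ∂S₀/∂r^j + Σ_{j=1}^{k} c_j V_1^{(j)}(φ(r)) = ε (the left-hand side depends only on r¹,…,r^k since j ≤ k ≤ n−m for each potential). Then ψ(r) = exp( i ( S₀(r¹,…,r^k) + Σ_{j=k+1}^{n} π_j r^j ) ) satisfies ℋψ = Eψ and 𝒫_jψ = π_j ψ for all j = k+1,…,n on ℝⁿ. -/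

import Mathlib

open Finset Complex

noncomputable section

def get (n : ℕ) (v : Fin n → ℝ) (t : ℕ) : ℝ :=
  if h : 1 ≤ t ∧ t ≤ n then v ⟨t - 1, by omega⟩ else 0

def evec (n i : ℕ) : Fin n → ℝ := fun t => if (t : ℕ) + 1 = i then 1 else 0

def prjL (n k : ℕ) (h : k ≤ n) : (Fin n → ℝ) →L[ℝ] (Fin k → ℝ) :=
  ContinuousLinearMap.pi fun t : Fin k => ContinuousLinearMap.proj ⟨(t : ℕ), by omega⟩

def linL (n k : ℕ) (pp : ℕ → ℝ) : (Fin n → ℝ) →L[ℝ] ℂ :=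
  ∑ t : Fin n, (if k + 1 ≤ (t : ℕ) + 1 then (pp ((t : ℕ) + 1) : ℂ) else 0) •
    (Complex.ofRealCLM.comp (ContinuousLinearMap.proj t))

lemma prjL_evec (n k : ℕ) (h : k ≤ n) (j : ℕ) : prjL n k h (evec n j) = evec k j := rfl

lemma evec_eq_zero {k j : ℕ} (h : k < j) : evec k j = 0 := by
  funext t
  exact if_neg (by have := t.isLt; omega)

lemma linL_apply (n k : ℕ) (pp : ℕ → ℝ) (v : Fin n → ℝ) :
    linL n k pp v = ∑ t : Fin n,
      (if k + 1 ≤ (t : ℕ) + 1 then (pp ((t : ℕ) + 1) : ℂ) else 0) * (v t : ℂ) := by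
  simp only [linL, ContinuousLinearMap.sum_apply, ContinuousLinearMap.smul_apply,
    ContinuousLinearMap.comp_apply, ContinuousLinearMap.proj_apply, smul_eq_mul,
    Complex.ofRealCLM_apply]

lemma linL_evec_high (n k : ℕ) (pp : ℕ → ℝ) (j : ℕ) (h1 : k + 1 ≤ j) (h2 : j ≤ n) :
    linL n k pp (evec n j) = pp j := by
  rw [linL_apply]
  rw [Finset.sum_eq_single (⟨j - 1, by omega⟩ : Fin n)]
  · have h3 : evec n j ⟨j - 1, by omega⟩ = 1 := if_pos (by simp; omega)
    rw [h3, if_pos (by simp; omega)]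
    simp
    congr 1
    omega
  · intro t _ ht
    have : evec n j t = 0 := by
      apply if_neg
      intro hc
      apply ht
      apply Fin.ext
      simp
      omega
    rw [this]
    simp
  · intro h; exact absurd (Finset.mem_univ _) h

lemma linL_evec_low (n k : ℕ) (pp : ℕ → ℝ) (j : ℕ) (h : j ≤ k) :
    linL n k pp (evec n j) = 0 := by
  rw [linL_apply]
  apply Finset.sum_eq_zero
  intro t _
  by_cases hc : (t : ℕ) + 1 = j
  · rw [if_neg (by omega)]; ring
  · have : evec n j t = 0 := if_neg hc
    rw [this]; simp

lemma get_succ (n : ℕ) (w : Fin n → ℝ) (t : Fin n) : get n w ((t : ℕ) + 1) = w t := by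
  have h : 1 ≤ (t : ℕ) + 1 ∧ (t : ℕ) + 1 ≤ n := ⟨by omega, by have := t.isLt; omega⟩
  unfold _root_.get
  rw [dif_pos h]
  exact congrArg w (Fin.ext (by simp))

lemma sum_Icc_one (n : ℕ) (g : ℕ → ℂ) : ∑ t : Fin n, g ((t : ℕ) + 1) = ∑ j ∈ Icc 1 n, g j := by
  rw [Fin.sum_univ_eq_sum_range (fun i => g (i + 1)) n, ← Finset.Ico_add_one_right_eq_Icc,
    Finset.sum_Ico_eq_sum_range]
  simp [Nat.add_comm]

lemma lin_eq (n k : ℕ) (pp : ℕ → ℝ) (w : Fin n → ℝ) :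
    linL n k pp w = ∑ j ∈ Icc (k + 1) n, (pp j : ℂ) * ((get n w j : ℝ) : ℂ) := by
  rw [linL_apply]
  have h1 : ∀ t : Fin n,
      (if k + 1 ≤ (t : ℕ) + 1 then (pp ((t : ℕ) + 1) : ℂ) else 0) * (w t : ℂ)
      = (fun j => if k + 1 ≤ j then (pp j : ℂ) * ((get n w j : ℝ) : ℂ) else 0) ((t : ℕ) + 1) := by
    intro t
    by_cases hc : k + 1 ≤ (t : ℕ) + 1
    · simp only [if_pos hc, get_succ]
    · simp only [if_neg hc, zero_mul]
  have hfil : (Icc 1 n).filter (fun j => k + 1 ≤ j) = Icc (k + 1) n := by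
    ext j
    simp only [Finset.mem_filter, Finset.mem_Icc]
    omega
  calc ∑ t : Fin n, (if k + 1 ≤ (t : ℕ) + 1 then (pp ((t : ℕ) + 1) : ℂ) else 0) * (w t : ℂ)
      = ∑ t : Fin n, (fun j => if k + 1 ≤ j then (pp j : ℂ) * ((get n w j : ℝ) : ℂ) else 0)
          ((t : ℕ) + 1) := Finset.sum_congr rfl (fun t _ => h1 t)
    _ = ∑ j ∈ Icc 1 n, (if k + 1 ≤ j then (pp j : ℂ) * ((get n w j : ℝ) : ℂ) else 0) :=
        sum_Icc_one n (fun j => if k + 1 ≤ j then (pp j : ℂ) * ((get n w j : ℝ) : ℂ) else 0)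
    _ = ∑ j ∈ (Icc 1 n).filter (fun j => k + 1 ≤ j), (pp j : ℂ) * ((get n w j : ℝ) : ℂ) :=
        (Finset.sum_filter _ _).symm
    _ = ∑ j ∈ Icc (k + 1) n, (pp j : ℂ) * ((get n w j : ℝ) : ℂ) := by rw [hfil]

def phi (n m : ℕ) (r : Fin n → ℝ) : Fin n → ℝ := fun i =>
  if (i : ℕ) + 1 ≤ n - m then
    r i + (1/4) * ∑ j ∈ Finset.Icc 1 ((i : ℕ) + 1 - 1), get n r j * get n r ((i : ℕ) + 1 - j)
  else
    -(1/4) * ∑ j ∈ Finset.Icc ((i : ℕ) + 1) n, get n r j * get n r (n - j + ((i : ℕ) + 1))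

def qe (n m : ℕ) (r : Fin n → ℝ) (t : ℕ) : ℝ :=
  if t = 0 then 1 else get n (phi n m r) t

def Vpos : ℕ → ℕ → (ℕ → ℝ) → ℝ
  | 0, _, _ => 0
  | 1, r, q => -q r
  | (k+2), r, q => Vpos (k+1) (r+1) q + (-q r) * Vpos (k+1) 1 q

def D2 (n : ℕ) (ψ : (Fin n → ℝ) → ℂ) (r : Fin n → ℝ) (a b : ℕ) : ℂ :=
  fderiv ℝ (fun w => fderiv ℝ ψ w (evec n b)) r (evec n a)

def Hop (n m k : ℕ) (c : ℕ → ℝ) (ψ : (Fin n → ℝ) → ℂ) (r : Fin n → ℝ) : ℂ :=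
  -(1/2) * (∑ a ∈ Finset.Icc 1 (n - m), D2 n ψ r a (n - m + 1 - a) +
      ∑ b ∈ Finset.Icc (n - m + 1) n, D2 n ψ r b (2 * n - m + 1 - b)) +
    (∑ j ∈ Finset.Icc 1 k, (c j : ℂ) * (Vpos j 1 (qe n m r) : ℝ)) * ψ r

/-- if `S₀` solves the reduced Hamilton–Jacobi equation, then
`ψ = exp(i(S₀(r¹,…,r^k) + Σ_{j=k+1}^n π_j r^j))` is a common eigenfunction of `ℋ`
and of `𝒫_j = −i∂/∂r^j`, `j = k+1,…,n`, with eigenvalues `E` and `π_j`. -/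
theorem solution_of_Schroedinger_positive_potentials
    (m k n : ℕ) (hk : 1 ≤ k) (hn : 2 * k + m ≤ n)
    (c : ℕ → ℝ) (pp : ℕ → ℝ) (E : ℂ) (ε : ℂ)
    (hε : ε = E - (∑ j ∈ Finset.Icc (k + 1) ((n - m) / 2),
            pp (n - m + 1 - j) * pp j : ℝ) -
          (((n - m - 2 * ((n - m) / 2) : ℕ) : ℝ) / 2 * pp (n - m - (n - m) / 2) ^ 2 : ℝ) -
          ((1/2) * ∑ j ∈ Finset.Icc (n - m + 1) n, pp j * pp (2 * n - m + 1 - j) : ℝ))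
    (S₀ : (Fin k → ℝ) → ℂ) (hS₀ : ContDiff ℝ (⊤ : ℕ∞) S₀)
    (hHJ : ∀ r : Fin n → ℝ,
      ∑ j ∈ Finset.Icc 1 k,
          (pp (n - m + 1 - j) : ℂ) *
            fderiv ℝ S₀ (fun t : Fin k => r ⟨(t : ℕ), by omega⟩) (evec k j) +
        ∑ j ∈ Finset.Icc 1 k, (c j : ℂ) * (Vpos j 1 (qe n m r) : ℝ) = ε)
    (ψ : (Fin n → ℝ) → ℂ)
    (hψ : ψ = fun r : Fin n → ℝ =>
      Complex.exp (Complex.I * (S₀ (fun t : Fin k => r ⟨(t : ℕ), by omega⟩) +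
        ∑ j ∈ Finset.Icc (k + 1) n, (pp j : ℂ) * (get n r j : ℝ)))) :
    (∀ r : Fin n → ℝ, Hop n m k c ψ r = E * ψ r) ∧
    (∀ j ∈ Finset.Icc (k + 1) n, ∀ r : Fin n → ℝ,
      -Complex.I * fderiv ℝ ψ r (evec n j) = (pp j : ℂ) * ψ r) := by
  have hkn : k ≤ n := by omega
  have hS₀d : Differentiable ℝ S₀ := hS₀.differentiable (by simp)
  have hψW : ψ = fun w => Complex.exp (Complex.I *
      (S₀ (prjL n k hkn w) + linL n k pp w)) := by
    rw [hψ]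
    funext w
    rw [lin_eq n k pp w]
    rfl
  have hder : ∀ w, HasFDerivAt ψ
      (Complex.exp (Complex.I * (S₀ (prjL n k hkn w) + linL n k pp w)) •
        (Complex.I • ((fderiv ℝ S₀ (prjL n k hkn w)).comp (prjL n k hkn) + linL n k pp))) w := by
    intro w
    have h1 : HasFDerivAt (fun y => S₀ (prjL n k hkn y))
        ((fderiv ℝ S₀ (prjL n k hkn w)).comp (prjL n k hkn)) w :=
      (hS₀d (prjL n k hkn w)).hasFDerivAt.comp w (prjL n k hkn).hasFDerivAt
    have h2 : HasFDerivAt (fun y => S₀ (prjL n k hkn y) + linL n k pp y)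
        ((fderiv ℝ S₀ (prjL n k hkn w)).comp (prjL n k hkn) + linL n k pp) w :=
      h1.add (linL n k pp).hasFDerivAt
    have h3 := (h2.const_mul Complex.I).cexp
    rw [hψW]
    exact h3
  have hfd : ∀ (w : Fin n → ℝ) (j : ℕ), fderiv ℝ ψ w (evec n j) =
      ψ w * (Complex.I * (fderiv ℝ S₀ (prjL n k hkn w) (evec k j) + linL n k pp (evec n j))) := by
    intro w j
    have he : ψ w = Complex.exp (Complex.I * (S₀ (prjL n k hkn w) + linL n k pp w)) := by
      rw [hψW]
    rw [(hder w).fderiv]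
    simp only [ContinuousLinearMap.smul_apply, ContinuousLinearMap.add_apply,
      ContinuousLinearMap.coe_comp', Function.comp_apply, smul_eq_mul]
    rw [prjL_evec, ← he]
  have hD2 : ∀ (a b : ℕ) (r : Fin n → ℝ), (evec k a = 0 ∨ evec k b = 0) →
      D2 n ψ r a b =
        -((fderiv ℝ S₀ (prjL n k hkn r) (evec k a) + linL n k pp (evec n a)) *
          (fderiv ℝ S₀ (prjL n k hkn r) (evec k b) + linL n k pp (evec n b))) * ψ r := by
    intro a b r hab
    have hfun : (fun w => fderiv ℝ ψ w (evec n b)) = fun w =>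
        ψ w * (Complex.I * (fderiv ℝ S₀ (prjL n k hkn w) (evec k b) + linL n k pp (evec n b))) :=
      funext fun w => hfd w b
    have hGc : ContDiff ℝ (⊤ : ℕ∞) (fun x : Fin k → ℝ => fderiv ℝ S₀ x (evec k b)) :=
      (hS₀.fderiv_right (by simp)).clm_apply contDiff_const
    have hgd : HasFDerivAt (fun w => fderiv ℝ S₀ (prjL n k hkn w) (evec k b))
        ((fderiv ℝ (fun x : Fin k → ℝ => fderiv ℝ S₀ x (evec k b)) (prjL n k hkn r)).comp
          (prjL n k hkn)) r :=
      ((hGc.differentiable (by simp)) _).hasFDerivAt.comp r (prjL n k hkn).hasFDerivAt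
    have hFb : HasFDerivAt (fun w => Complex.I *
        (fderiv ℝ S₀ (prjL n k hkn w) (evec k b) + linL n k pp (evec n b)))
        (Complex.I • ((fderiv ℝ (fun x : Fin k → ℝ => fderiv ℝ S₀ x (evec k b))
          (prjL n k hkn r)).comp (prjL n k hkn))) r :=
      (hgd.add_const _).const_mul Complex.I
    have hprod := (hder r).mul hFb
    have hz : fderiv ℝ (fun x : Fin k → ℝ => fderiv ℝ S₀ x (evec k b)) (prjL n k hkn r)
        (evec k a) = 0 := by
      rcases hab with h | h
      · rw [h, map_zero]
      · have hg0 : (fun x : Fin k → ℝ => fderiv ℝ S₀ x (evec k b)) = fun _ => (0 : ℂ) := by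
          funext x
          rw [h, map_zero]
        rw [hg0, fderiv_fun_const]
        simp
    have he : ψ r = Complex.exp (Complex.I * (S₀ (prjL n k hkn r) + linL n k pp r)) := by
      rw [hψW]
    unfold D2
    rw [hfun, HasFDerivAt.fderiv (f := fun w => ψ w * (Complex.I * (fderiv ℝ S₀ (prjL n k hkn w) (evec k b) + linL n k pp (evec n b)))) hprod]
    simp only [ContinuousLinearMap.add_apply, ContinuousLinearMap.smul_apply,
      ContinuousLinearMap.coe_comp', Function.comp_apply, smul_eq_mul, prjL_evec]
    rw [hz, ← he]
    linear_combination ((fderiv ℝ S₀ (prjL n k hkn r) (evec k a) + linL n k pp (evec n a)) *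
      (fderiv ℝ S₀ (prjL n k hkn r) (evec k b) + linL n k pp (evec n b)) * ψ r) * Complex.I_mul_I
  have hFhigh : ∀ (r : Fin n → ℝ) (j : ℕ), k + 1 ≤ j → j ≤ n →
      fderiv ℝ S₀ (prjL n k hkn r) (evec k j) + linL n k pp (evec n j) = (pp j : ℂ) := by
    intro r j h1 h2
    rw [evec_eq_zero (show k < j by omega), map_zero, zero_add, linL_evec_high n k pp j h1 h2]
  have hFlow : ∀ (r : Fin n → ℝ) (j : ℕ), j ≤ k →
      fderiv ℝ S₀ (prjL n k hkn r) (evec k j) + linL n k pp (evec n j) =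
        fderiv ℝ S₀ (prjL n k hkn r) (evec k j) := by
    intro r j h2
    rw [linL_evec_low n k pp j h2, add_zero]
  constructor
  · -- the Hamiltonian eigen-equation
    intro r
    have hHJ' := hHJ r
    have harg : (fun t : Fin k => r ⟨(t : ℕ), by omega⟩) = prjL n k hkn r := rfl
    rw [harg] at hHJ'
    set Fv : ℕ → ℂ := fun j =>
      fderiv ℝ S₀ (prjL n k hkn r) (evec k j) + linL n k pp (evec n j) with hFv
    have hFvhigh : ∀ j, k + 1 ≤ j → j ≤ n → Fv j = (pp j : ℂ) := fun j h1 h2 => hFhigh r j h1 h2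
    have hFvlow : ∀ j, j ≤ k → Fv j = fderiv ℝ S₀ (prjL n k hkn r) (evec k j) :=
      fun j h2 => hFlow r j h2
    have hT1 : ∑ a ∈ Icc 1 (n - m), D2 n ψ r a (n - m + 1 - a)
        = (∑ a ∈ Icc 1 (n - m), -(Fv a * Fv (n - m + 1 - a))) * ψ r := by
      rw [Finset.sum_mul]
      refine Finset.sum_congr rfl fun a ha => ?_
      rw [Finset.mem_Icc] at ha
      have hor : evec k a = 0 ∨ evec k (n - m + 1 - a) = 0 := by
        by_cases hak : k < a
        · exact Or.inl (evec_eq_zero hak)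
        · exact Or.inr (evec_eq_zero (by omega))
      rw [hD2 a (n - m + 1 - a) r hor]
    have hT2 : ∑ b ∈ Icc (n - m + 1) n, D2 n ψ r b (2 * n - m + 1 - b)
        = (∑ b ∈ Icc (n - m + 1) n, -(Fv b * Fv (2 * n - m + 1 - b))) * ψ r := by
      rw [Finset.sum_mul]
      refine Finset.sum_congr rfl fun b hb => ?_
      rw [Finset.mem_Icc] at hb
      exact hD2 b (2 * n - m + 1 - b) r (Or.inl (evec_eq_zero (by omega)))
    have hchunk1 : ∑ a ∈ Ico 1 (k + 1), Fv a * Fv (n - m + 1 - a)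
        = ∑ j ∈ Icc 1 k, (pp (n - m + 1 - j) : ℂ) *
            fderiv ℝ S₀ (prjL n k hkn r) (evec k j) := by
      rw [Finset.Ico_add_one_right_eq_Icc]
      refine Finset.sum_congr rfl fun a ha => ?_
      rw [Finset.mem_Icc] at ha
      rw [hFvlow a ha.2, hFvhigh (n - m + 1 - a) (by omega) (by omega)]
      ring
    have hchunk3 : ∑ a ∈ Ico (n - m - k + 1) (n - m + 1), Fv a * Fv (n - m + 1 - a)
        = ∑ j ∈ Icc 1 k, (pp (n - m + 1 - j) : ℂ) *
            fderiv ℝ S₀ (prjL n k hkn r) (evec k j) := by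
      refine Finset.sum_nbij' (fun a => n - m + 1 - a) (fun j => n - m + 1 - j) ?_ ?_ ?_ ?_ ?_
      · intro a ha
        rw [Finset.mem_Ico] at ha
        rw [Finset.mem_Icc]
        omega
      · intro j hj
        rw [Finset.mem_Icc] at hj
        rw [Finset.mem_Ico]
        omega
      · intro a ha
        rw [Finset.mem_Ico] at ha
        omega
      · intro j hj
        rw [Finset.mem_Icc] at hj
        omega
      · intro a ha
        rw [Finset.mem_Ico] at ha
        rw [hFvhigh a (by omega) (by omega), hFvlow (n - m + 1 - a) (by omega)]
        rw [show n - m + 1 - (n - m + 1 - a) = a from by omega]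
    have hchunk2 : ∑ a ∈ Ico (k + 1) (n - m - k + 1), Fv a * Fv (n - m + 1 - a)
        = ∑ a ∈ Ico (k + 1) (n - m - k + 1), ((pp a : ℂ) * (pp (n - m + 1 - a) : ℂ)) := by
      refine Finset.sum_congr rfl fun a ha => ?_
      rw [Finset.mem_Ico] at ha
      rw [hFvhigh a (by omega) (by omega), hFvhigh (n - m + 1 - a) (by omega) (by omega)]
    have hsplitA : ∑ a ∈ Icc 1 (n - m), Fv a * Fv (n - m + 1 - a)
        = (∑ a ∈ Ico 1 (k + 1), Fv a * Fv (n - m + 1 - a))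
          + ((∑ a ∈ Ico (k + 1) (n - m - k + 1), Fv a * Fv (n - m + 1 - a))
          + (∑ a ∈ Ico (n - m - k + 1) (n - m + 1), Fv a * Fv (n - m + 1 - a))) := by
      rw [← Finset.Ico_add_one_right_eq_Icc,
        ← Finset.sum_Ico_consecutive (fun a => Fv a * Fv (n - m + 1 - a))
          (show 1 ≤ k + 1 by omega) (show k + 1 ≤ n - m + 1 by omega),
        ← Finset.sum_Ico_consecutive (fun a => Fv a * Fv (n - m + 1 - a))
          (show k + 1 ≤ n - m - k + 1 by omega) (show n - m - k + 1 ≤ n - m + 1 by omega)]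
    have hA2 : ∑ b ∈ Icc (n - m + 1) n, Fv b * Fv (2 * n - m + 1 - b)
        = ∑ b ∈ Icc (n - m + 1) n, ((pp b : ℂ) * (pp (2 * n - m + 1 - b) : ℂ)) := by
      refine Finset.sum_congr rfl fun b hb => ?_
      rw [Finset.mem_Icc] at hb
      rw [hFvhigh b (by omega) (by omega), hFvhigh (2 * n - m + 1 - b) (by omega) (by omega)]
    have hM : ∑ a ∈ Ico (k + 1) (n - m - k + 1), ((pp a : ℂ) * (pp (n - m + 1 - a) : ℂ))
        = 2 * (∑ j ∈ Icc (k + 1) ((n - m) / 2), ((pp (n - m + 1 - j) : ℂ) * (pp j : ℂ)))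
          + (((n - m - 2 * ((n - m) / 2) : ℕ) : ℂ)) * (pp (n - m - (n - m) / 2) : ℂ) ^ 2 := by
      rw [← Finset.sum_Ico_consecutive (fun a => ((pp a : ℂ) * (pp (n - m + 1 - a) : ℂ)))
        (show k + 1 ≤ (n - m) / 2 + 1 by omega) (show (n - m) / 2 + 1 ≤ n - m - k + 1 by omega)]
      have hpart2 : ∑ a ∈ Ico ((n - m) / 2 + 1) (n - m - k + 1),
            ((pp a : ℂ) * (pp (n - m + 1 - a) : ℂ))
          = ∑ j ∈ Ico (k + 1) (n - m - (n - m) / 2 + 1),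
            ((pp (n - m + 1 - j) : ℂ) * (pp j : ℂ)) := by
        refine Finset.sum_nbij' (fun a => n - m + 1 - a) (fun j => n - m + 1 - j) ?_ ?_ ?_ ?_ ?_
        · intro a ha
          rw [Finset.mem_Ico] at ha
          rw [Finset.mem_Ico]
          omega
        · intro j hj
          rw [Finset.mem_Ico] at hj
          rw [Finset.mem_Ico]
          omega
        · intro a ha
          rw [Finset.mem_Ico] at ha
          omega
        · intro j hj
          rw [Finset.mem_Ico] at hj
          omega
        · intro a ha
          rw [Finset.mem_Ico] at ha
          rw [show n - m + 1 - (n - m + 1 - a) = a from by omega]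
      have hfirst : ∑ a ∈ Ico (k + 1) ((n - m) / 2 + 1), ((pp a : ℂ) * (pp (n - m + 1 - a) : ℂ))
          = ∑ j ∈ Icc (k + 1) ((n - m) / 2), ((pp (n - m + 1 - j) : ℂ) * (pp j : ℂ)) := by
        rw [Finset.Ico_add_one_right_eq_Icc]
        exact Finset.sum_congr rfl fun a _ => by ring
      rw [hpart2, hfirst]
      rcases Nat.even_or_odd (n - m) with he | ho
      · obtain ⟨t, ht⟩ := he
        have h1 : n - m - (n - m) / 2 + 1 = (n - m) / 2 + 1 := by omega
        have h2 : (n - m - 2 * ((n - m) / 2) : ℕ) = 0 := by omega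
        rw [h1, h2, Finset.Ico_add_one_right_eq_Icc]
        push_cast
        ring
      · obtain ⟨t, ht⟩ := ho
        have h1 : n - m - (n - m) / 2 + 1 = (n - m) / 2 + 1 + 1 := by omega
        have h2 : (n - m - 2 * ((n - m) / 2) : ℕ) = 1 := by omega
        rw [h1, h2, Finset.sum_Ico_succ_top (show k + 1 ≤ (n - m) / 2 + 1 by omega),
          Finset.Ico_add_one_right_eq_Icc]
        rw [show n - m + 1 - ((n - m) / 2 + 1) = n - m - (n - m) / 2 from by omega]
        rw [show (n - m) / 2 + 1 = n - m - (n - m) / 2 from by omega]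
        push_cast
        ring
    unfold Hop
    rw [hT1, hT2, Finset.sum_neg_distrib, Finset.sum_neg_distrib, hsplitA, hchunk1, hchunk2,
      hchunk3, hA2, hM]
    push_cast at hε
    linear_combination ψ r * hHJ' + ψ r * hε
  · -- the momentum eigen-equations
    intro j hj r
    rw [Finset.mem_Icc] at hj
    rw [hfd r j, hFhigh r j hj.1 hj.2]
    linear_combination (-(pp j : ℂ) * ψ r) * Complex.I_mul_I
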